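/- arXiv:1808.01691 — 4 statements merged into one kernel-verified Lean document; each statement's English description precedes it below -/
import Mathlib

section
/- In the randomize-first-sample-second design, for distinct units i ≠ i' in opposite treatment arms, the covariance of sampling indicators is Cov(S_i^0, S_{i'}^1) = n_0 n_1/(N²(N-1)), which is positive. -/
open Finset

/-- Expectation under the uniform distribution on a finite sample space. -/
noncomputable def Ex {α : Type*} (Ω : Finset α) (f : α → ℝ) : ℝ :=
  (∑ ω ∈ Ω, f ω) / (Ω.card : ℝ)

/-- The randomize-first-sample-second design: outcomes are triples `(A, B, C)`
where `A` is the treatment-1 group of size `N₁` (its complement is group 0),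
`B ⊆ A` is the size-`n₁` sample from group 1, and `C ⊆ Aᶜ` is the size-`n₀`
sample from group 0, all chosen uniformly at random. -/
def design2 (N N1 n1 n0 : ℕ) :
    Finset (Finset (Fin N) × Finset (Fin N) × Finset (Fin N)) :=
  Finset.univ.filter (fun p =>
    p.1.card = N1 ∧ p.2.1 ⊆ p.1 ∧ p.2.1.card = n1 ∧
    p.2.2 ⊆ p.1ᶜ ∧ p.2.2.card = n0)

/-- Indicator that unit `i` is sampled from treatment group 1. -/
def S1 {N : ℕ} (i : Fin N)
    (p : Finset (Fin N) × Finset (Fin N) × Finset (Fin N)) : ℝ :=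
  if i ∈ p.2.1 then 1 else 0

/-- Indicator that unit `i` is sampled from treatment group 0. -/
def S0 {N : ℕ} (i : Fin N)
    (p : Finset (Fin N) × Finset (Fin N) × Finset (Fin N)) : ℝ :=
  if i ∈ p.2.2 then 1 else 0

variable {α : Type*} [DecidableEq α]

lemma card_powersetCard_filter_mem (s : Finset α) (i : α) (hi : i ∈ s) (n : ℕ) :
    ((s.powersetCard (n+1)).filter (fun t => i ∈ t)).card = (s.card - 1).choose n := by
  rw [← Finset.card_erase_of_mem hi, ← Finset.card_powersetCard]
  refine Finset.card_bij' (fun t _ => t.erase i) (fun u _ => insert i u) ?_ ?_ ?_ ?_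
  · intro t ht
    simp only [mem_filter, mem_powersetCard] at ht
    simp only [mem_powersetCard]
    exact ⟨Finset.erase_subset_erase _ ht.1.1,
      by rw [Finset.card_erase_of_mem ht.2, ht.1.2]; omega⟩
  · intro u hu
    simp only [mem_powersetCard] at hu
    have hiu : i ∉ u := fun h => (Finset.notMem_erase i s) (hu.1 h)
    simp only [mem_filter, mem_powersetCard]
    refine ⟨⟨?_, ?_⟩, Finset.mem_insert_self _ _⟩
    · exact Finset.insert_subset hi (hu.1.trans (Finset.erase_subset _ _))
    · rw [Finset.card_insert_of_notMem hiu, hu.2]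
  · intro t ht
    simp only [mem_filter] at ht
    exact Finset.insert_erase ht.2
  · intro u hu
    simp only [mem_powersetCard] at hu
    exact Finset.erase_insert (fun h => (Finset.notMem_erase i s) (hu.1 h))

lemma powersetCard_filter_notMem (s : Finset α) (i : α) (n : ℕ) :
    (s.powersetCard n).filter (fun t => i ∉ t) = (s.erase i).powersetCard n := by
  ext t
  simp only [mem_filter, mem_powersetCard, Finset.subset_erase]
  tauto

lemma sum_design2 {N N1 n1 n0 : ℕ} (f : Finset (Fin N) × Finset (Fin N) × Finset (Fin N) → ℝ) :
    ∑ p ∈ design2 N N1 n1 n0, f p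
      = ∑ A ∈ (univ : Finset (Fin N)).powersetCard N1, ∑ B ∈ A.powersetCard n1,
          ∑ C ∈ Aᶜ.powersetCard n0, f (A, B, C) := by
  have h1 : (univ : Finset (Fin N)).powersetCard N1
      = univ.filter (fun A => A.card = N1) := by
    ext A; simp [mem_powersetCard]
  rw [design2, Finset.sum_filter, Fintype.sum_prod_type, h1, Finset.sum_filter]
  refine Finset.sum_congr rfl fun A _ => ?_
  rw [Fintype.sum_prod_type]
  by_cases hA : A.card = N1
  · simp only [hA, true_and, if_true]
    have h2 : A.powersetCard n1 = univ.filter (fun B => B ⊆ A ∧ B.card = n1) := by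
      ext B; simp [mem_powersetCard]
    rw [h2, Finset.sum_filter]
    refine Finset.sum_congr rfl fun B _ => ?_
    by_cases hB : B ⊆ A ∧ B.card = n1
    · simp only [hB.1, hB.2, true_and, if_true]
      have h3 : Aᶜ.powersetCard n0 = univ.filter (fun C => C ⊆ Aᶜ ∧ C.card = n0) := by
        ext C; simp [mem_powersetCard]
      rw [h3, Finset.sum_filter]
    · rw [if_neg (by tauto)]
      exact Finset.sum_eq_zero fun C _ => if_neg (by tauto)
  · rw [if_neg (by tauto)]
    exact Finset.sum_eq_zero fun B _ => Finset.sum_eq_zero fun C _ => if_neg (by tauto)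

lemma sum_ind {β : Type*} (s : Finset β) (p : β → Prop) [DecidablePred p] (c : ℝ) :
    ∑ x ∈ s, (if p x then c else 0) = ((s.filter p).card : ℝ) * c := by
  rw [← Finset.sum_filter, Finset.sum_const, nsmul_eq_mul]

lemma sum_ind_powersetCard (s : Finset α) (i : α) (m : ℕ) :
    ∑ C ∈ s.powersetCard (m+1), (if i ∈ C then (1:ℝ) else 0)
      = if i ∈ s then ((s.card - 1).choose m : ℝ) else 0 := by
  rw [sum_ind]
  by_cases hi : i ∈ s
  · rw [if_pos hi, card_powersetCard_filter_mem s i hi m, mul_one]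
  · rw [if_neg hi]
    have h : (s.powersetCard (m+1)).filter (fun t => i ∈ t) = ∅ := by
      ext t
      simp only [mem_filter, mem_powersetCard, notMem_empty, iff_false, not_and]
      rintro ⟨hts, _⟩ hit
      exact hi (hts hit)
    rw [h]; simp

-- basic facts about Fin N universe
lemma card_univ_fin (N : ℕ) : (univ : Finset (Fin N)).card = N := by simp

lemma compl_card_of_mem {N N1 : ℕ} {A : Finset (Fin N)}
    (hA : A ∈ (univ : Finset (Fin N)).powersetCard N1) : Aᶜ.card = N - N1 := by
  rw [mem_powersetCard] at hA
  rw [Finset.card_compl, hA.2, Fintype.card_fin]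

-- total count
lemma card_design2 {N N1 n1 n0 : ℕ} :
    ((design2 N N1 n1 n0).card : ℝ)
      = (N.choose N1 * N1.choose n1 * (N - N1).choose n0 : ℕ) := by
  have h := sum_design2 (N := N) (N1 := N1) (n1 := n1) (n0 := n0) (fun _ => (1:ℝ))
  rw [Finset.sum_const, nsmul_eq_mul, mul_one] at h
  have hin : ∀ A ∈ (univ : Finset (Fin N)).powersetCard N1,
      (∑ B ∈ A.powersetCard n1, ∑ C ∈ Aᶜ.powersetCard n0, (1:ℝ))
        = ((N1.choose n1 * (N - N1).choose n0 : ℕ) : ℝ) := by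
    intro A hA
    have h1 := compl_card_of_mem hA
    rw [mem_powersetCard] at hA
    simp only [Finset.sum_const, Finset.card_powersetCard, nsmul_eq_mul, mul_one, hA.2, h1]
    push_cast; ring
  rw [h, Finset.sum_congr rfl hin, Finset.sum_const, Finset.card_powersetCard,
    card_univ_fin, nsmul_eq_mul]
  push_cast; ring

lemma sum_S0' {N N1 n1 m0 : ℕ} (i : Fin N) :
    ∑ p ∈ design2 N N1 n1 (m0+1), S0 i p
      = (((N-1).choose N1 * N1.choose n1 * (N - N1 - 1).choose m0 : ℕ) : ℝ) := by
  rw [sum_design2]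
  have hin : ∀ A ∈ (univ : Finset (Fin N)).powersetCard N1,
      (∑ B ∈ A.powersetCard n1, ∑ C ∈ Aᶜ.powersetCard (m0+1), S0 i (A,B,C))
        = (if i ∈ Aᶜ then ((N1.choose n1 * (N - N1 - 1).choose m0 : ℕ) : ℝ) else 0) := by
    intro A hA
    have h1 := compl_card_of_mem hA
    rw [mem_powersetCard] at hA
    have h2 : ∀ B ∈ A.powersetCard n1, ∑ C ∈ Aᶜ.powersetCard (m0+1), S0 i (A,B,C)
        = (if i ∈ Aᶜ then (((N - N1 - 1).choose m0 : ℕ) : ℝ) else 0) := by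
      intro B _
      have h3 := sum_ind_powersetCard Aᶜ i m0
      rw [h1] at h3
      simpa only [S0] using h3
    rw [Finset.sum_congr rfl h2, Finset.sum_const, Finset.card_powersetCard, hA.2, nsmul_eq_mul]
    by_cases hi : i ∈ Aᶜ
    · rw [if_pos hi, if_pos hi]; push_cast; ring
    · rw [if_neg hi, if_neg hi, mul_zero]
  rw [Finset.sum_congr rfl hin, sum_ind]
  have hf : ((univ : Finset (Fin N)).powersetCard N1).filter (fun A => i ∈ Aᶜ)
      = (univ.erase i).powersetCard N1 := by
    rw [← powersetCard_filter_notMem]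
    exact Finset.filter_congr (fun A _ => by simp)
  rw [hf, Finset.card_powersetCard, Finset.card_erase_of_mem (mem_univ i), card_univ_fin]
  push_cast; ring

lemma sum_S1' {N M1 m1 n0 : ℕ} (i' : Fin N) :
    ∑ p ∈ design2 N (M1+1) (m1+1) n0, S1 i' p
      = (((N-1).choose M1 * M1.choose m1 * (N - (M1+1)).choose n0 : ℕ) : ℝ) := by
  rw [sum_design2]
  have hin : ∀ A ∈ (univ : Finset (Fin N)).powersetCard (M1+1),
      (∑ B ∈ A.powersetCard (m1+1), ∑ C ∈ Aᶜ.powersetCard n0, S1 i' (A,B,C))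
        = (if i' ∈ A then ((M1.choose m1 * (N - (M1+1)).choose n0 : ℕ) : ℝ) else 0) := by
    intro A hA
    have h1 := compl_card_of_mem hA
    rw [mem_powersetCard] at hA
    have h2 : ∀ B ∈ A.powersetCard (m1+1), ∑ C ∈ Aᶜ.powersetCard n0, S1 i' (A,B,C)
        = (((N - (M1+1)).choose n0 : ℕ) : ℝ) * (if i' ∈ B then 1 else 0) := by
      intro B _
      simp only [S1]
      have h4 := Finset.sum_const (s := Aᶜ.powersetCard n0)
        (b := (if i' ∈ B then (1:ℝ) else 0))
      rw [h4, Finset.card_powersetCard, h1, nsmul_eq_mul]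
    rw [Finset.sum_congr rfl h2, ← Finset.mul_sum, sum_ind_powersetCard A i' m1, hA.2]
    simp only [Nat.add_sub_cancel]
    by_cases hi : i' ∈ A
    · rw [if_pos hi, if_pos hi]; push_cast; ring
    · rw [if_neg hi, if_neg hi, mul_zero]
  rw [Finset.sum_congr rfl hin, sum_ind]
  rw [card_powersetCard_filter_mem _ i' (mem_univ i') M1, card_univ_fin]
  push_cast; ring

lemma sum_joint' {N M1 m1 m0 : ℕ} (i i' : Fin N) (hii : i ≠ i') :
    ∑ p ∈ design2 N (M1+1) (m1+1) (m0+1), S0 i p * S1 i' p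
      = (((N-2).choose M1 * M1.choose m1 * (N - (M1+1) - 1).choose m0 : ℕ) : ℝ) := by
  rw [sum_design2]
  have hin : ∀ A ∈ (univ : Finset (Fin N)).powersetCard (M1+1),
      (∑ B ∈ A.powersetCard (m1+1), ∑ C ∈ Aᶜ.powersetCard (m0+1), S0 i (A,B,C) * S1 i' (A,B,C))
        = (if i ∈ Aᶜ ∧ i' ∈ A then ((M1.choose m1 * (N - (M1+1) - 1).choose m0 : ℕ) : ℝ) else 0) := by
    intro A hA
    have h1 := compl_card_of_mem hA
    rw [mem_powersetCard] at hA
    have h2 : ∀ B ∈ A.powersetCard (m1+1),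
        ∑ C ∈ Aᶜ.powersetCard (m0+1), S0 i (A,B,C) * S1 i' (A,B,C)
        = (if i ∈ Aᶜ then (((N - (M1+1) - 1).choose m0 : ℕ) : ℝ) else 0)
            * (if i' ∈ B then 1 else 0) := by
      intro B _
      simp only [S0, S1]
      have h4 : ∑ C ∈ Aᶜ.powersetCard (m0+1),
          (if i ∈ C then (1:ℝ) else 0) * (if i' ∈ B then 1 else 0)
          = (∑ C ∈ Aᶜ.powersetCard (m0+1), if i ∈ C then (1:ℝ) else 0)
            * (if i' ∈ B then 1 else 0) := (Finset.sum_mul _ _ _).symm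
      have h3 := sum_ind_powersetCard Aᶜ i m0
      rw [h1] at h3
      rw [h4, h3]
    rw [Finset.sum_congr rfl h2, ← Finset.mul_sum, sum_ind_powersetCard A i' m1, hA.2]
    simp only [Nat.add_sub_cancel]
    by_cases hi : i ∈ Aᶜ
    · by_cases hi' : i' ∈ A
      · rw [if_pos hi, if_pos hi', if_pos ⟨hi, hi'⟩]; push_cast; ring
      · rw [if_pos hi, if_neg hi', if_neg (fun h => hi' h.2), mul_zero]
    · rw [if_neg hi, zero_mul, if_neg (fun h : i ∈ Aᶜ ∧ i' ∈ A => hi h.1)]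
  rw [Finset.sum_congr rfl hin, sum_ind]
  have hf : ((univ : Finset (Fin N)).powersetCard (M1+1)).filter (fun A => i ∈ Aᶜ ∧ i' ∈ A)
      = ((univ.erase i).powersetCard (M1+1)).filter (fun A => i' ∈ A) := by
    rw [← powersetCard_filter_notMem, Finset.filter_filter]
    exact Finset.filter_congr (fun A _ => by simp [and_comm])
  rw [hf, card_powersetCard_filter_mem _ i'
    (Finset.mem_erase.2 ⟨hii.symm, mem_univ i'⟩) M1,
    Finset.card_erase_of_mem (mem_univ i), card_univ_fin]
  have : N - 1 - 1 = N - 2 := by omega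
  rw [this]
  push_cast; ring

set_option maxHeartbeats 1000000 in
/-- Cov(Sᵢ⁰, Sᵢ'¹) = n₀n₁/(N²(N-1)) for distinct units
i ≠ i' in opposite treatment arms. -/
theorem design2_opposite_arm_covariance (N N1 n1 n0 : ℕ) (hN : 2 ≤ N)
    (hN1 : N1 ≤ N) (hn1 : n1 ≤ N1) (hn0 : n0 ≤ N - N1)
    (i i' : Fin N) (hii : i ≠ i') :
    Ex (design2 N N1 n1 n0) (fun p => S0 i p * S1 i' p)
      - Ex (design2 N N1 n1 n0) (fun p => S0 i p)
        * Ex (design2 N N1 n1 n0) (fun p => S1 i' p)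
      = ((n0 : ℝ) * (n1 : ℝ)) / ((N : ℝ) ^ 2 * ((N : ℝ) - 1)) := by
  rcases Nat.eq_zero_or_pos n0 with h0 | h0
  · subst h0
    have hz : ∀ p ∈ design2 N N1 n1 0, S0 i p = 0 := by
      intro p hp
      rw [design2, Finset.mem_filter] at hp
      have he : p.2.2 = ∅ := Finset.card_eq_zero.1 hp.2.2.2.2.2
      simp [S0, he]
    have e1 : ∑ p ∈ design2 N N1 n1 0, S0 i p * S1 i' p = 0 :=
      Finset.sum_eq_zero fun p hp => by rw [hz p hp, zero_mul]
    have e2 : ∑ p ∈ design2 N N1 n1 0, S0 i p = 0 := Finset.sum_eq_zero hz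
    simp [Ex, e1, e2]
  rcases Nat.eq_zero_or_pos n1 with h1 | h1
  · subst h1
    have hz : ∀ p ∈ design2 N N1 0 n0, S1 i' p = 0 := by
      intro p hp
      rw [design2, Finset.mem_filter] at hp
      have he : p.2.1 = ∅ := Finset.card_eq_zero.1 hp.2.2.2.1
      simp [S1, he]
    have e1 : ∑ p ∈ design2 N N1 0 n0, S0 i p * S1 i' p = 0 :=
      Finset.sum_eq_zero fun p hp => by rw [hz p hp, mul_zero]
    have e2 : ∑ p ∈ design2 N N1 0 n0, S1 i' p = 0 := Finset.sum_eq_zero hz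
    simp [Ex, e1, e2]
  -- main case
  obtain ⟨m1, rfl⟩ : ∃ m, n1 = m + 1 := ⟨n1 - 1, by omega⟩
  obtain ⟨m0, rfl⟩ : ∃ m, n0 = m + 1 := ⟨n0 - 1, by omega⟩
  obtain ⟨M1, rfl⟩ : ∃ m, N1 = m + 1 := ⟨N1 - 1, by omega⟩
  obtain ⟨k, rfl⟩ : ∃ K, N = M1 + K + 2 := ⟨N - M1 - 2, by omega⟩
  have hm0k : m0 + 1 ≤ k + 1 := by omega
  have hm1M : m1 + 1 ≤ M1 + 1 := hn1
  rw [Ex, Ex, Ex, card_design2, sum_S0' i, sum_S1' i', sum_joint' i i' hii]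
  have s1 : M1 + k + 2 - 1 = M1 + k + 1 := by omega
  have s2 : M1 + k + 2 - 2 = M1 + k := by omega
  have s3 : M1 + k + 2 - (M1 + 1) = k + 1 := by omega
  have s4 : M1 + k + 2 - (M1 + 1) - 1 = k := by omega
  rw [s4, s3, s2, s1]
  -- nat identities
  have E1 : (M1+k+1).choose (M1+1) * (M1+k+2) = (M1+k+2).choose (M1+1) * (k+1) := by
    have h := Nat.choose_mul_succ_eq (M1+k+1) (M1+1)
    rw [show M1+k+1+1 = M1+k+2 by omega, show M1+k+2 - (M1+1) = k+1 by omega] at h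
    exact h
  have E2 : (k+1) * k.choose m0 = (k+1).choose (m0+1) * (m0+1) := by
    have h := Nat.add_one_mul_choose_eq k m0
    simpa using h
  have E3 : (M1+k+2) * (M1+k+1).choose M1 = (M1+k+2).choose (M1+1) * (M1+1) := by
    have h := Nat.add_one_mul_choose_eq (M1+k+1) M1
    simpa [show M1+k+1+1 = M1+k+2 by omega] using h
  have E4 : (M1+1) * M1.choose m1 = (M1+1).choose (m1+1) * (m1+1) := by
    have h := Nat.add_one_mul_choose_eq M1 m1
    simpa using h
  have E5 : (M1+k).choose M1 * (M1+k+1) = (M1+k+1).choose M1 * (k+1) := by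
    have h := Nat.choose_mul_succ_eq (M1+k) M1
    rw [show M1+k+1 - M1 = k+1 by omega] at h
    exact h
  -- cast to ℝ
  have R1 : ((M1+k+1).choose (M1+1) : ℝ) * ((M1:ℝ)+k+2)
      = ((M1+k+2).choose (M1+1) : ℝ) * ((k:ℝ)+1) := by exact_mod_cast E1
  have R2 : ((k:ℝ)+1) * (k.choose m0 : ℝ) = ((k+1).choose (m0+1) : ℝ) * ((m0:ℝ)+1) := by
    exact_mod_cast E2
  have R3 : ((M1:ℝ)+k+2) * ((M1+k+1).choose M1 : ℝ)
      = ((M1+k+2).choose (M1+1) : ℝ) * ((M1:ℝ)+1) := by exact_mod_cast E3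
  have R4 : ((M1:ℝ)+1) * (M1.choose m1 : ℝ) = ((M1+1).choose (m1+1) : ℝ) * ((m1:ℝ)+1) := by
    exact_mod_cast E4
  have R5 : ((M1+k).choose M1 : ℝ) * ((M1:ℝ)+k+1)
      = ((M1+k+1).choose M1 : ℝ) * ((k:ℝ)+1) := by exact_mod_cast E5
  -- positivity
  have hX : (0:ℝ) < ((M1+k+2).choose (M1+1) : ℝ) := by
    exact_mod_cast Nat.choose_pos (by omega)
  have hY : (0:ℝ) < ((M1+1).choose (m1+1) : ℝ) := by
    exact_mod_cast Nat.choose_pos hm1M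
  have hZ : (0:ℝ) < ((k+1).choose (m0+1) : ℝ) := by
    exact_mod_cast Nat.choose_pos hm0k
  have hT : (0:ℝ) < ((M1+k+2).choose (M1+1) : ℝ) * ((M1+1).choose (m1+1) : ℝ)
      * ((k+1).choose (m0+1) : ℝ) := by positivity
  have hNr : (0:ℝ) < (M1:ℝ)+k+2 := by positivity
  have hNr1 : (0:ℝ) < (M1:ℝ)+k+1 := by positivity
  push_cast
  have EA : ((M1+k+1).choose (M1+1) : ℝ) * ((M1+1).choose (m1+1) : ℝ) * (k.choose m0 : ℝ)
        / (((M1+k+2).choose (M1+1) : ℝ) * ((M1+1).choose (m1+1) : ℝ) * ((k+1).choose (m0+1) : ℝ))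
      = ((m0:ℝ)+1) / ((M1:ℝ)+k+2) := by
    rw [div_eq_div_iff hT.ne' hNr.ne']
    linear_combination (((M1+1).choose (m1+1) : ℝ) * (k.choose m0 : ℝ)) * R1
      + (((M1+k+2).choose (M1+1) : ℝ) * ((M1+1).choose (m1+1) : ℝ)) * R2
  have EB : ((M1+k+1).choose M1 : ℝ) * (M1.choose m1 : ℝ) * ((k+1).choose (m0+1) : ℝ)
        / (((M1+k+2).choose (M1+1) : ℝ) * ((M1+1).choose (m1+1) : ℝ) * ((k+1).choose (m0+1) : ℝ))
      = ((m1:ℝ)+1) / ((M1:ℝ)+k+2) := by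
    rw [div_eq_div_iff hT.ne' hNr.ne']
    linear_combination ((M1.choose m1 : ℝ) * ((k+1).choose (m0+1) : ℝ)) * R3
      + (((M1+k+2).choose (M1+1) : ℝ) * ((k+1).choose (m0+1) : ℝ)) * R4
  have EJ : ((M1+k).choose M1 : ℝ) * (M1.choose m1 : ℝ) * (k.choose m0 : ℝ)
        / (((M1+k+2).choose (M1+1) : ℝ) * ((M1+1).choose (m1+1) : ℝ) * ((k+1).choose (m0+1) : ℝ))
      = (((m0:ℝ)+1) * ((m1:ℝ)+1)) / (((M1:ℝ)+k+2) * ((M1:ℝ)+k+1)) := by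
    rw [div_eq_div_iff hT.ne' (by positivity : ((M1:ℝ)+k+2) * ((M1:ℝ)+k+1) ≠ 0)]
    linear_combination (((M1:ℝ)+k+2) * (M1.choose m1 : ℝ) * (k.choose m0 : ℝ)) * R5
      + (((k:ℝ)+1) * (M1.choose m1 : ℝ) * (k.choose m0 : ℝ)) * R3
      + (((M1+k+2).choose (M1+1) : ℝ) * ((k:ℝ)+1) * (k.choose m0 : ℝ)) * R4
      + (((M1+k+2).choose (M1+1) : ℝ) * ((M1+1).choose (m1+1) : ℝ) * ((m1:ℝ)+1)) * R2
  have h2 : ((M1:ℝ)+k+2) - 1 = (M1:ℝ)+k+1 := by ring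
  rw [EA, EB, EJ, h2]
  have hne : ((M1:ℝ)+k+2) ≠ 0 := hNr.ne'
  have hne1 : ((M1:ℝ)+k+1) ≠ 0 := hNr1.ne'
  field_simp
  ring
end

section
/- In the randomize-first-sample-second design, the mean-difference estimator τ̂ = ȳ(1) - ȳ(0), where ȳ(T) = (1/n_T)∑_i S_i^T Y_i(T), is an unbiased estimator of the finite-population average treatment effect τ = (1/N)∑_i (Y_i(1) - Y_i(0)). -/
open Finset

/-!
Permutations of the units map the design onto itself, so every unit has the same probability of
landing in the treatment-1 sample `B`. Since `B` always has `n₁` units these probabilities sum to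
`n₁`, hence each equals `n₁ / N`, and by linearity `ȳ(1)` has mean `(1/N) ∑ Yᵢ(1)`. The same
argument applies to `C` and `ȳ(0)`.
-/

open scoped Pointwise

section Expectation

variable {α : Type*}

theorem Ex_sub (Ω : Finset α) (f g : α → ℝ) :
    Ex Ω (fun p => f p - g p) = Ex Ω f - Ex Ω g := by
  simp only [Ex, Finset.sum_sub_distrib, sub_div]

theorem Ex_div_const (Ω : Finset α) (f : α → ℝ) (c : ℝ) :
    Ex Ω (fun p => f p / c) = Ex Ω f / c := by
  simp only [Ex, ← Finset.sum_div, div_right_comm]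

theorem Ex_congr {Ω : Finset α} {f g : α → ℝ} (h : ∀ p ∈ Ω, f p = g p) : Ex Ω f = Ex Ω g := by
  rw [Ex, Ex, Finset.sum_congr rfl h]

theorem Ex_const {Ω : Finset α} (hΩ : Ω.Nonempty) (c : ℝ) : Ex Ω (fun _ => c) = c := by
  have : (Ω.card : ℝ) ≠ 0 := by exact_mod_cast hΩ.card_ne_zero
  simp only [Ex, Finset.sum_const, nsmul_eq_mul]
  field_simp

end Expectation

section InclusionProbability

variable {α ι : Type*} [DecidableEq ι]

noncomputable def inclusionProb (Ω : Finset α) (sel : α → Finset ι) (i : ι) : ℝ :=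
  Ex Ω (fun p => if i ∈ sel p then 1 else 0)

theorem inclusionProb_smul {G : Type*} [Group G] [MulAction G α] [MulAction G ι]
    {Ω : Finset α} (hΩ : ∀ g : G, ∀ p ∈ Ω, g • p ∈ Ω) {sel : α → Finset ι}
    (hsel : ∀ (g : G) p, sel (g • p) = g • sel p) (g : G) (i : ι) :
    inclusionProb Ω sel (g • i) = inclusionProb Ω sel i := by
  unfold inclusionProb Ex
  congr 1
  refine Finset.sum_nbij' (g⁻¹ • ·) (g • ·) (hΩ g⁻¹) (hΩ g) (fun p _ => smul_inv_smul g p)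
    (fun p _ => inv_smul_smul g p) fun p _ => ?_
  simp only [hsel, Finset.mem_inv_smul_finset_iff]

variable [Fintype ι]

theorem Ex_sum_eq_sum_inclusionProb_mul (Ω : Finset α) (sel : α → Finset ι) (Y : ι → ℝ) :
    Ex Ω (fun p => ∑ i ∈ sel p, Y i) = ∑ i, inclusionProb Ω sel i * Y i := by
  simp only [inclusionProb, Ex, div_mul_eq_mul_div, ← Finset.sum_div, Finset.sum_mul, boole_mul]
  rw [Finset.sum_comm]
  simp only [Finset.sum_ite_mem, Finset.univ_inter]

theorem sum_inclusionProb {Ω : Finset α} (hΩ : Ω.Nonempty) {sel : α → Finset ι} {k : ℕ}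
    (hk : ∀ p ∈ Ω, (sel p).card = k) : ∑ i, inclusionProb Ω sel i = k := by
  have h := Ex_sum_eq_sum_inclusionProb_mul Ω sel 1
  simp only [Pi.one_apply, mul_one, Finset.sum_const, nsmul_eq_mul] at h
  rw [← h, ← Ex_const hΩ (k : ℝ)]
  exact Ex_congr fun p hp => by rw [hk p hp]

theorem inclusionProb_eq_of_isPretransitive {G : Type*} [Group G] [MulAction G α]
    [MulAction G ι] [MulAction.IsPretransitive G ι] {Ω : Finset α} (hne : Ω.Nonempty)
    (hΩ : ∀ g : G, ∀ p ∈ Ω, g • p ∈ Ω) {sel : α → Finset ι}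
    (hsel : ∀ (g : G) p, sel (g • p) = g • sel p) {k : ℕ}
    (hk : ∀ p ∈ Ω, (sel p).card = k) (i : ι) :
    inclusionProb Ω sel i = k / Fintype.card ι := by
  have hconst : ∀ j, inclusionProb Ω sel j = inclusionProb Ω sel i := fun j => by
    obtain ⟨g, rfl⟩ := MulAction.exists_smul_eq G i j
    exact inclusionProb_smul hΩ hsel g i
  have hsum := sum_inclusionProb hne hk
  simp only [hconst, Finset.sum_const, Finset.card_univ, nsmul_eq_mul] at hsum
  have hι : (Fintype.card ι : ℝ) ≠ 0 := by exact_mod_cast (Fintype.card_pos_iff.2 ⟨i⟩).ne'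
  rw [← hsum]
  field_simp

theorem Ex_sum_eq_of_isPretransitive {G : Type*} [Group G] [MulAction G α]
    [MulAction G ι] [MulAction.IsPretransitive G ι] {Ω : Finset α} (hne : Ω.Nonempty)
    (hΩ : ∀ g : G, ∀ p ∈ Ω, g • p ∈ Ω) {sel : α → Finset ι}
    (hsel : ∀ (g : G) p, sel (g • p) = g • sel p) {k : ℕ}
    (hk : ∀ p ∈ Ω, (sel p).card = k) (Y : ι → ℝ) :
    Ex Ω (fun p => ∑ i ∈ sel p, Y i) = k / Fintype.card ι * ∑ i, Y i := by
  rw [Ex_sum_eq_sum_inclusionProb_mul, Finset.mul_sum]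
  exact Finset.sum_congr rfl fun i _ => by
    rw [inclusionProb_eq_of_isPretransitive hne hΩ hsel hk i]

end InclusionProbability

theorem mem_design2 {N N1 n1 n0 : ℕ} {p : Finset (Fin N) × Finset (Fin N) × Finset (Fin N)} :
    p ∈ design2 N N1 n1 n0 ↔
      p.1.card = N1 ∧ p.2.1 ⊆ p.1 ∧ p.2.1.card = n1 ∧ p.2.2 ⊆ p.1ᶜ ∧ p.2.2.card = n0 := by
  simp [design2]

theorem design2_nonempty {N N1 n1 n0 : ℕ} (hN1 : N1 ≤ N) (hn1 : n1 ≤ N1) (hn0 : n0 ≤ N - N1) :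
    (design2 N N1 n1 n0).Nonempty := by
  obtain ⟨A, -, hA⟩ := Finset.exists_subset_card_eq (s := Finset.univ (α := Fin N))
    (by simpa using hN1)
  obtain ⟨B, hBA, hB⟩ := Finset.exists_subset_card_eq (hA ▸ hn1)
  obtain ⟨C, hCA, hC⟩ := Finset.exists_subset_card_eq (s := Aᶜ) (n := n0)
    (by rwa [Finset.card_compl, hA, Fintype.card_fin])
  exact ⟨(A, B, C), mem_design2.2 ⟨hA, hBA, hB, hCA, hC⟩⟩

theorem smul_mem_design2 {N N1 n1 n0 : ℕ} (σ : Equiv.Perm (Fin N))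
    {p : Finset (Fin N) × Finset (Fin N) × Finset (Fin N)} (hp : p ∈ design2 N N1 n1 n0) :
    σ • p ∈ design2 N N1 n1 n0 := by
  obtain ⟨hA, hBA, hB, hCA, hC⟩ := mem_design2.1 hp
  refine mem_design2.2 ⟨?_, Finset.smul_finset_subset_smul_finset hBA, ?_, ?_, ?_⟩
  · simp [hA]
  · simp [hB]
  · have hcompl : σ • p.1ᶜ = (σ • p.1)ᶜ := by
      simp only [Finset.compl_eq_univ_sdiff, Finset.smul_finset_sdiff, Finset.smul_finset_univ]
    exact hcompl ▸ Finset.smul_finset_subset_smul_finset hCA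
  · simp [hC]

/-- the mean-difference estimator τ̂ = ȳ(1) - ȳ(0) is unbiased
for the finite-population average treatment effect τ. -/
theorem design2_mean_difference_unbiased (N N1 n1 n0 : ℕ)
    (hN1 : N1 ≤ N) (hn1 : 1 ≤ n1) (hn1' : n1 ≤ N1)
    (hn0 : 1 ≤ n0) (hn0' : n0 ≤ N - N1) (Y1 Y0 : Fin N → ℝ) :
    Ex (design2 N N1 n1 n0)
      (fun p => (∑ i ∈ p.2.1, Y1 i) / (n1 : ℝ) - (∑ i ∈ p.2.2, Y0 i) / (n0 : ℝ))
      = (∑ i, (Y1 i - Y0 i)) / (N : ℝ) := by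
  have hne := design2_nonempty hN1 hn1' hn0'
  have mean1 := Ex_sum_eq_of_isPretransitive (G := Equiv.Perm (Fin N)) hne smul_mem_design2
    (sel := fun p => p.2.1) (fun _ _ => rfl) (fun p hp => (mem_design2.1 hp).2.2.1) Y1
  have mean0 := Ex_sum_eq_of_isPretransitive (G := Equiv.Perm (Fin N)) hne smul_mem_design2
    (sel := fun p => p.2.2) (fun _ _ => rfl) (fun p hp => (mem_design2.1 hp).2.2.2.2) Y0
  have hn1R : (n1 : ℝ) ≠ 0 := Nat.cast_ne_zero.2 (Nat.one_le_iff_ne_zero.1 hn1)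
  have hn0R : (n0 : ℝ) ≠ 0 := Nat.cast_ne_zero.2 (Nat.one_le_iff_ne_zero.1 hn0)
  rw [Ex_sub, Ex_div_const, Ex_div_const, mean1, mean0, Fintype.card_fin, Finset.sum_sub_distrib]
  field_simp
end

section
/- In the randomize-first-sample-second design, the variance of the within-arm sample mean is Var[ȳ(T)] = ((N - n_T)/N)·(S_T²/n_T). -/
/-!
Every `n₁`-subset `B` lies in the same number `C(N - n₁, N₁ - n₁)` of `N₁`-subsets `A`, so the
sample `B` is marginally a uniform `n₁`-subset of the whole population: the design is simple
random sampling without replacement. Its inclusion probabilities are `πᵢ = n₁/N` and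
`πᵢⱼ = n₁(n₁ - 1)/(N(N - 1))` for `i ≠ j`; they give the first two moments of `∑_{i ∈ B} Yᵢ`,
and the variance formula is then algebra.
-/

open Finset

/-- Randomize-first-sample-second, one arm: pairs `(A, B)` with `A` the
size-`N₁` treatment group and `B ⊆ A` the size-`n₁` sample, chosen uniformly. -/
def design2arm (N N1 n1 : ℕ) : Finset (Finset (Fin N) × Finset (Fin N)) :=
  Finset.univ.filter (fun p => p.1.card = N1 ∧ p.2 ⊆ p.1 ∧ p.2.card = n1)

open scoped BigOperators

section SimpleRandomSampling

variable {α : Type*} [DecidableEq α]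

theorem sum_sum_eq_sum_card_filter_smul {ι κ M : Type*} [DecidableEq κ] [AddCommMonoid M]
    {𝒮 : Finset ι} {T : Finset κ} {φ : ι → Finset κ} (hφ : ∀ B ∈ 𝒮, φ B ⊆ T) (g : κ → M) :
    ∑ B ∈ 𝒮, ∑ x ∈ φ B, g x = ∑ x ∈ T, #{B ∈ 𝒮 | x ∈ φ B} • g x := by
  simp_rw [← sum_const]
  exact sum_comm' fun B x => by
    simp only [mem_filter]
    exact ⟨fun h => ⟨⟨h.1, h.2⟩, hφ B h.1 h.2⟩, fun h => h.1⟩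

theorem sum_powersetCard_sum_powersetCard {M : Type*} [AddCommMonoid M] (s : Finset α) {k m : ℕ}
    (hkm : k ≤ m) (g : Finset α → M) :
    ∑ A ∈ powersetCard m s, ∑ B ∈ powersetCard k A, g B
      = (#s - k).choose (m - k) • ∑ B ∈ powersetCard k s, g B := by
  rw [sum_comm' (t' := powersetCard k s) (s' := fun B => {A ∈ powersetCard m s | B ⊆ A}),
    smul_sum]
  · refine sum_congr rfl fun B hB => ?_
    obtain ⟨hBs, hBk⟩ := mem_powersetCard.1 hB
    rw [sum_const, card_filter_powersetCard_subset B s m hBs (hBk ▸ hkm), hBk]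
  · intro A B
    simp only [mem_powersetCard, mem_filter]
    constructor
    · rintro ⟨⟨hAs, hAm⟩, hBA, hBk⟩
      exact ⟨⟨⟨hAs, hAm⟩, hBA⟩, hBA.trans hAs, hBk⟩
    · rintro ⟨⟨⟨hAs, hAm⟩, hBA⟩, -, hBk⟩
      exact ⟨⟨hAs, hAm⟩, hBA, hBk⟩

theorem card_filter_mem_powersetCard_mul_card {s : Finset α} {i : α} (hi : i ∈ s) (k : ℕ) :
    #{B ∈ powersetCard k s | i ∈ B} * #s = k * (#s).choose k := by
  obtain ⟨n, hn⟩ := Nat.exists_eq_add_one_of_ne_zero (card_ne_zero_of_mem hi)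
  cases k with
  | zero => simp
  | succ k =>
    have h := card_filter_powersetCard_subset {i} s (k + 1) (singleton_subset_iff.2 hi) (by simp)
    simp only [singleton_subset_iff, card_singleton] at h
    rw [h, hn, Nat.add_sub_cancel, Nat.add_sub_cancel, mul_comm, Nat.add_one_mul_choose_eq,
      mul_comm]

theorem card_filter_mem_and_mem_powersetCard_mul {s : Finset α} {i j : α} (hi : i ∈ s)
    (hj : j ∈ s) (hij : i ≠ j) (k : ℕ) :
    #{B ∈ powersetCard k s | i ∈ B ∧ j ∈ B} * (#s * (#s - 1)) = k * (k - 1) * (#s).choose k := by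
  have hpair : {i, j} ⊆ s := insert_subset hi (singleton_subset_iff.2 hj)
  obtain ⟨n, hn⟩ : ∃ n, #s = n + 2 :=
    ⟨#s - 2, by have := card_le_card hpair; rw [card_pair hij] at this; omega⟩
  match k with
  | 0 | 1 =>
    rw [card_eq_zero.2 (filter_eq_empty_iff.2 fun B hB hijB => ?_)]
    · simp
    have := card_le_card (insert_subset hijB.1 (singleton_subset_iff.2 hijB.2))
    rw [card_pair hij, (mem_powersetCard.1 hB).2] at this
    omega
  | k + 2 =>
    have h := card_filter_powersetCard_subset {i, j} s (k + 2) hpair (by rw [card_pair hij]; omega)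
    simp only [insert_subset_iff, singleton_subset_iff, card_pair hij] at h
    rw [h, hn, Nat.add_sub_cancel, Nat.add_sub_cancel, show n + 2 - 1 = n + 1 by omega,
      show k + 2 - 1 = k + 1 by omega]
    calc n.choose k * ((n + 2) * (n + 1))
        = (n + 2) * ((n + 1) * n.choose k) := by ring
      _ = (n + 2) * (n + 1).choose (k + 1) * (k + 1) := by rw [Nat.add_one_mul_choose_eq]; ring
      _ = (k + 2) * (k + 1) * (n + 2).choose (k + 2) := by rw [Nat.add_one_mul_choose_eq]; ring

theorem cast_card_filter_mem_and_mem_powersetCard {s : Finset α} {i j : α} (hi : i ∈ s)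
    (hj : j ∈ s) (k : ℕ) :
    (#{B ∈ powersetCard k s | i ∈ B ∧ j ∈ B} : ℝ)
      = (#s).choose k * if i = j then (k : ℝ) / #s else k * (k - 1) / (#s * (#s - 1)) := by
  have hs : (#s : ℝ) ≠ 0 := by exact_mod_cast card_ne_zero_of_mem hi
  split_ifs with hij
  · subst hij
    simp only [and_self]
    rw [mul_div_assoc', eq_div_iff hs, mul_comm _ (k : ℝ)]
    exact_mod_cast card_filter_mem_powersetCard_mul_card hi k
  · have hs1 : (#s : ℝ) - 1 ≠ 0 := by
      have := card_le_card (insert_subset hi (singleton_subset_iff.2 hj))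
      rw [card_pair hij] at this
      rw [sub_ne_zero]
      exact_mod_cast (by omega : #s ≠ 1)
    rw [mul_div_assoc', eq_div_iff (mul_ne_zero hs hs1)]
    obtain rfl | hk := k.eq_zero_or_pos
    · simp
    have hs' : 1 ≤ #s := Nat.one_le_iff_ne_zero.2 (card_ne_zero_of_mem hi)
    have h := congrArg (Nat.cast : ℕ → ℝ) (card_filter_mem_and_mem_powersetCard_mul hi hj hij k)
    push_cast [hk, hs'] at h
    linear_combination h

theorem sum_sum_ite_eq_mul_mul {s : Finset α} (a b : ℝ) (f : α → ℝ) :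
    ∑ i ∈ s, ∑ j ∈ s, (if i = j then a else b) * (f i * f j)
      = a * ∑ i ∈ s, f i ^ 2 + b * ((∑ i ∈ s, f i) ^ 2 - ∑ i ∈ s, f i ^ 2) := by
  have split (i j : α) : (if i = j then a else b) * (f i * f j)
      = b * (f i * f j) + if i = j then (a - b) * f i ^ 2 else 0 := by
    split_ifs with h
    · subst h; ring
    · ring
  have diag (i : α) (hi : i ∈ s) :
      ∑ j ∈ s, (if i = j then (a - b) * f i ^ 2 else 0) = (a - b) * f i ^ 2 := by
    rw [sum_ite_eq, if_pos hi]
  simp_rw [split, sum_add_distrib]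
  rw [sum_congr rfl diag, ← mul_sum, sq (∑ i ∈ s, f i), sum_mul_sum]
  simp_rw [← mul_sum]
  ring

theorem expect_powersetCard_sum {s : Finset α} {k : ℕ} (hk : k ≤ #s) (f : α → ℝ) :
    𝔼 B ∈ powersetCard k s, ∑ i ∈ B, f i = k / #s * ∑ i ∈ s, f i := by
  have hC : ((#s).choose k : ℝ) ≠ 0 := by exact_mod_cast (Nat.choose_pos hk).ne'
  have hcount : ∀ i ∈ s, (#{B ∈ powersetCard k s | i ∈ B} : ℝ) = k / #s * (#s).choose k := by
    intro i hi
    have hs : (#s : ℝ) ≠ 0 := by exact_mod_cast card_ne_zero_of_mem hi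
    rw [div_mul_eq_mul_div, eq_div_iff hs]
    exact_mod_cast card_filter_mem_powersetCard_mul_card hi k
  rw [expect_eq_sum_div_card, card_powersetCard,
    sum_sum_eq_sum_card_filter_smul (fun B hB => (mem_powersetCard.1 hB).1),
    sum_congr rfl fun i hi => by rw [nsmul_eq_mul, hcount i hi], ← mul_sum]
  field_simp

theorem expect_powersetCard_sq_sum {s : Finset α} {k : ℕ} (hk : k ≤ #s) (f : α → ℝ) :
    𝔼 B ∈ powersetCard k s, (∑ i ∈ B, f i) ^ 2
      = k / #s * ∑ i ∈ s, f i ^ 2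
        + k * (k - 1) / (#s * (#s - 1)) * ((∑ i ∈ s, f i) ^ 2 - ∑ i ∈ s, f i ^ 2) := by
  have hC : ((#s).choose k : ℝ) ≠ 0 := by exact_mod_cast (Nat.choose_pos hk).ne'
  have hsq (B : Finset α) : (∑ i ∈ B, f i) ^ 2 = ∑ p ∈ B ×ˢ B, f p.1 * f p.2 := by
    rw [sq, sum_mul_sum, sum_product]
  rw [expect_eq_sum_div_card, card_powersetCard, sum_congr rfl fun B _ => hsq B,
    sum_sum_eq_sum_card_filter_smul (T := s ×ˢ s)
      (fun B hB => product_subset_product (mem_powersetCard.1 hB).1 (mem_powersetCard.1 hB).1),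
    sum_product]
  dsimp only
  simp only [mem_product]
  rw [sum_congr rfl fun i hi => sum_congr rfl fun j hj => by
    rw [nsmul_eq_mul, cast_card_filter_mem_and_mem_powersetCard hi hj, mul_assoc]]
  simp_rw [← mul_sum]
  rw [mul_div_cancel_left₀ _ hC, sum_sum_ite_eq_mul_mul]

end SimpleRandomSampling

theorem sum_sub_sum_div_card_sq {ι : Type*} (s : Finset ι) (Y : ι → ℝ) :
    ∑ i ∈ s, (Y i - (∑ j ∈ s, Y j) / #s) ^ 2 = ∑ i ∈ s, Y i ^ 2 - (∑ i ∈ s, Y i) ^ 2 / #s := by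
  obtain rfl | hs := s.eq_empty_or_nonempty
  · simp
  have hs : (#s : ℝ) ≠ 0 := by exact_mod_cast hs.card_ne_zero
  simp only [sub_sq, sum_add_distrib, sum_sub_distrib, sum_const, nsmul_eq_mul, ← sum_mul,
    ← mul_sum]
  field_simp
  ring

theorem Ex_design2arm_snd {N N1 n1 : ℕ} (hn1 : n1 ≤ N1) (hN1 : N1 ≤ N)
    (g : Finset (Fin N) → ℝ) :
    Ex (design2arm N N1 n1) (fun p => g p.2) = 𝔼 B ∈ powersetCard n1 univ, g B := by
  have hsum {M : Type} [AddCommMonoid M] (h : Finset (Fin N) → M) :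
      ∑ p ∈ design2arm N N1 n1, h p.2
        = (N - n1).choose (N1 - n1) • ∑ B ∈ powersetCard n1 univ, h B := by
    rw [sum_finset_product' _ (powersetCard N1 univ) (powersetCard n1) (f := fun _ B => h B),
      sum_powersetCard_sum_powersetCard _ hn1, card_univ, Fintype.card_fin]
    intro p
    simp [design2arm, and_comm]
  have hcard : #(design2arm N N1 n1)
      = (N - n1).choose (N1 - n1) * #(powersetCard n1 (univ : Finset (Fin N))) := by
    simpa using hsum (M := ℕ) fun _ => 1
  have hm : ((N - n1).choose (N1 - n1) : ℝ) ≠ 0 := by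
    exact_mod_cast (Nat.choose_pos (Nat.sub_le_sub_right hN1 n1)).ne'
  rw [Ex, expect_eq_sum_div_card, hsum g, hcard, nsmul_eq_mul, Nat.cast_mul,
    mul_div_mul_left _ _ hm]

theorem design2_sample_mean_variance_general (N N1 n1 : ℕ) (hN : 2 ≤ N)
    (hN1 : N1 ≤ N) (hn1' : n1 ≤ N1)
    (Y : Fin N → ℝ) (Ybar S1sq : ℝ)
    (hYbar : Ybar = (∑ i, Y i) / (N : ℝ))
    (hS1 : S1sq = (∑ i, (Y i - Ybar) ^ 2) / ((N : ℝ) - 1)) :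
    Ex (design2arm N N1 n1) (fun p => ((∑ i ∈ p.2, Y i) / (n1 : ℝ)) ^ 2)
      - (Ex (design2arm N N1 n1) (fun p => (∑ i ∈ p.2, Y i) / (n1 : ℝ))) ^ 2
      = (((N : ℝ) - (n1 : ℝ)) / (N : ℝ)) * (S1sq / (n1 : ℝ)) := by
  have hk : n1 ≤ #(univ : Finset (Fin N)) := by rw [card_univ, Fintype.card_fin]; omega
  have hvar : ∑ i, (Y i - Ybar) ^ 2 = ∑ i, Y i ^ 2 - (∑ i, Y i) ^ 2 / N := by
    simpa [hYbar] using sum_sub_sum_div_card_sq univ Y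
  have hN0 : (N : ℝ) ≠ 0 := by positivity
  have hN_sub_one : (N : ℝ) - 1 ≠ 0 := by
    rw [sub_ne_zero]
    exact_mod_cast (by omega : N ≠ 1)
  rw [Ex_design2arm_snd hn1' hN1 fun B => ((∑ i ∈ B, Y i) / n1) ^ 2,
    Ex_design2arm_snd hn1' hN1 fun B => (∑ i ∈ B, Y i) / n1]
  simp_rw [div_pow, ← expect_div]
  rw [expect_powersetCard_sq_sum hk, expect_powersetCard_sum hk, hS1, hvar]
  simp only [card_univ, Fintype.card_fin]
  field_simp
  ring

/-- Var[ȳ(1)] = ((N - n₁)/N)·S₁²/n₁. -/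
theorem design2_sample_mean_variance (N N1 n1 : ℕ) (hN : 2 ≤ N)
    (hN1 : N1 ≤ N) (hn1 : 1 ≤ n1) (hn1' : n1 ≤ N1)
    (Y : Fin N → ℝ) (Ybar S1sq : ℝ)
    (hYbar : Ybar = (∑ i, Y i) / (N : ℝ))
    (hS1 : S1sq = (∑ i, (Y i - Ybar) ^ 2) / ((N : ℝ) - 1)) :
    Ex (design2arm N N1 n1) (fun p => ((∑ i ∈ p.2, Y i) / (n1 : ℝ)) ^ 2)
      - (Ex (design2arm N N1 n1) (fun p => (∑ i ∈ p.2, Y i) / (n1 : ℝ))) ^ 2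
      = (((N : ℝ) - (n1 : ℝ)) / (N : ℝ)) * (S1sq / (n1 : ℝ)) :=
  design2_sample_mean_variance_general N N1 n1 hN hN1 hn1' Y Ybar S1sq hYbar hS1
end

section
/- Under simple random sampling without replacement of n units from N, the sample variance s² = (1/(n-1))∑_{i sampled}(Y_i - ȳ)² is an unbiased estimator of the population variance S² = (1/(N-1))∑_i (Y_i - Ȳ)². -/
open Finset

/-- Simple random sampling without replacement: all `n`-element subsets of `Fin N`. -/
def srs (N n : ℕ) : Finset (Finset (Fin N)) :=
  Finset.univ.filter (fun s => s.card = n)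

/-- Sampling indicator: 1 if unit `i` is in the sample. -/
def ind {N : ℕ} (i : Fin N) (s : Finset (Fin N)) : ℝ :=
  if i ∈ s then 1 else 0

/-! Both s² and S² are `1 / (2 m (m - 1))` times the sum of `(Y i - Y j)²` over the ordered pairs of
a set of size `m`. Summed over all `n`-subsets, each ordered pair of distinct units is counted in
`C(N - 2, n - 2)` samples, and `n (n - 1) C(N, n) = N (N - 1) C(N - 2, n - 2)` turns the average of the
sample expressions into the population one. -/

noncomputable def sampleVariance {α : Type*} (Y : α → ℝ) (t : Finset α) : ℝ :=
  (∑ i ∈ t, (Y i - (∑ j ∈ t, Y j) / #t) ^ 2) / (#t - 1)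

theorem sum_sum_sub_sq_eq {α : Type*} (Y : α → ℝ) (t : Finset α) :
    ∑ i ∈ t, ∑ j ∈ t, (Y i - Y j) ^ 2 = 2 * #t * ∑ i ∈ t, (Y i - (∑ j ∈ t, Y j) / #t) ^ 2 := by
  rcases t.eq_empty_or_nonempty with rfl | ht
  · simp
  have hcard : (#t : ℝ) ≠ 0 := by exact_mod_cast ht.card_pos.ne'
  simp only [sub_sq, sum_add_distrib, sum_sub_distrib, sum_const, nsmul_eq_mul, ← mul_sum,
    ← sum_mul, div_pow]
  field_simp
  ring

theorem sampleVariance_eq {α : Type*} (Y : α → ℝ) {t : Finset α} (ht : 2 ≤ #t) :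
    sampleVariance Y t = (∑ i ∈ t, ∑ j ∈ t, (Y i - Y j) ^ 2) / (2 * #t * (#t - 1)) := by
  have ht' : (2 : ℝ) ≤ #t := by exact_mod_cast ht
  have : (#t : ℝ) - 1 ≠ 0 := by linarith
  rw [sampleVariance, sum_sum_sub_sq_eq]
  generalize ∑ i ∈ t, (Y i - (∑ j ∈ t, Y j) / #t) ^ 2 = V
  field_simp

theorem sum_sum_mem_eq_sum_sum_filter {α M : Type*} [DecidableEq α] [AddCommMonoid M]
    {s : Finset α} {P : Finset (Finset α)} (hP : ∀ ω ∈ P, ω ⊆ s) (g : Finset α → α → M) :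
    ∑ ω ∈ P, ∑ i ∈ ω, g ω i = ∑ i ∈ s, ∑ ω ∈ P with i ∈ ω, g ω i :=
  sum_comm' fun ω i ↦ by
    simp only [mem_filter]
    exact ⟨fun ⟨hω, hi⟩ ↦ ⟨⟨hω, hi⟩, hP ω hω hi⟩, fun ⟨⟨hω, hi⟩, _⟩ ↦ ⟨hω, hi⟩⟩

theorem card_filter_powersetCard_mem_and_mem {α : Type*} [DecidableEq α] {s : Finset α} {n : ℕ}
    (hn : 2 ≤ n) {i j : α} (hi : i ∈ s) (hj : j ∈ s) (hij : i ≠ j) :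
    #{ω ∈ powersetCard n s | i ∈ ω ∧ j ∈ ω} = (#s - 2).choose (n - 2) := by
  have hpair : {ω ∈ powersetCard n s | i ∈ ω ∧ j ∈ ω} = {ω ∈ powersetCard n s | {i, j} ⊆ ω} :=
    filter_congr fun ω _ ↦ by simp [insert_subset_iff]
  rw [hpair, card_filter_powersetCard_subset _ _ _ (by simp [insert_subset_iff, hi, hj])
    (by rwa [card_pair hij]), card_pair hij]

theorem sum_powersetCard_sum_sum {α M : Type*} [DecidableEq α] [AddCommMonoid M]
    {s : Finset α} {n : ℕ} (hn : 2 ≤ n) (f : α → α → M) (hf : ∀ i, f i i = 0) :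
    ∑ ω ∈ powersetCard n s, ∑ i ∈ ω, ∑ j ∈ ω, f i j
      = (#s - 2).choose (n - 2) • ∑ i ∈ s, ∑ j ∈ s, f i j := by
  have hP : ∀ ω ∈ powersetCard n s, ω ⊆ s := fun ω hω ↦ (mem_powersetCard.1 hω).1
  calc ∑ ω ∈ powersetCard n s, ∑ i ∈ ω, ∑ j ∈ ω, f i j
      = ∑ i ∈ s, ∑ j ∈ s, ∑ ω ∈ powersetCard n s with i ∈ ω ∧ j ∈ ω, f i j := by
        rw [sum_sum_mem_eq_sum_sum_filter hP]
        refine sum_congr rfl fun i _ ↦ ?_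
        rw [sum_sum_mem_eq_sum_sum_filter fun ω hω ↦ hP ω (mem_filter.1 hω).1]
        simp only [filter_filter]
    _ = ∑ i ∈ s, ∑ j ∈ s, (#s - 2).choose (n - 2) • f i j := by
        refine sum_congr rfl fun i hi ↦ sum_congr rfl fun j hj ↦ ?_
        rw [sum_const]
        obtain rfl | hij := eq_or_ne i j
        · simp [hf]
        · rw [card_filter_powersetCard_mem_and_mem hn hi hj hij]
    _ = _ := by simp only [smul_sum]

theorem cast_mul_sub_one_mul_choose {K : Type*} [Field K] [CharZero K] {N n : ℕ} (hn : 2 ≤ n) :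
    (n * (n - 1) * N.choose n : K) = N * (N - 1) * (N - 2).choose (n - 2) := by
  have h := congrArg (Nat.cast : ℕ → K) (Nat.choose_mul (n := N) hn)
  push_cast [Nat.cast_choose_two] at h
  linear_combination 2 * h

theorem sum_powersetCard_sampleVariance {α : Type*} [DecidableEq α] (Y : α → ℝ) {s : Finset α}
    {n : ℕ} (hn : 2 ≤ n) (hns : n ≤ #s) :
    ∑ ω ∈ powersetCard n s, sampleVariance Y ω = (#s).choose n * sampleVariance Y s := by
  have hn' : (2 : ℝ) ≤ n := by exact_mod_cast hn
  have hs : (2 : ℝ) ≤ #s := by exact_mod_cast hn.trans hns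
  have hsample : ∀ ω ∈ powersetCard n s, sampleVariance Y ω
      = (∑ i ∈ ω, ∑ j ∈ ω, (Y i - Y j) ^ 2) / (2 * n * (n - 1)) := fun ω hω ↦ by
    rw [sampleVariance_eq Y ((mem_powersetCard.1 hω).2 ▸ hn), (mem_powersetCard.1 hω).2]
  rw [sum_congr rfl hsample, ← sum_div, sum_powersetCard_sum_sum hn _ (by simp), nsmul_eq_mul,
    sampleVariance_eq Y (hn.trans hns)]
  have hchoose := cast_mul_sub_one_mul_choose (K := ℝ) (N := #s) hn
  have : (n : ℝ) - 1 ≠ 0 := by linarith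
  have : (#s : ℝ) - 1 ≠ 0 := by linarith
  field_simp
  linear_combination -(∑ i ∈ s, ∑ j ∈ s, (Y i - Y j) ^ 2) * hchoose

theorem sample_variance_unbiased_general (N n : ℕ) (hn : 2 ≤ n)
    (hnN : n ≤ N) (Y : Fin N → ℝ) (Ybar Ssq : ℝ)
    (hYbar : Ybar = (∑ i, Y i) / (N : ℝ))
    (hSsq : Ssq = (∑ i, (Y i - Ybar) ^ 2) / ((N : ℝ) - 1)) :
    Ex (srs N n)
      (fun ω => (∑ i ∈ ω, (Y i - (∑ j ∈ ω, Y j) / (n : ℝ)) ^ 2) / ((n : ℝ) - 1))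
      = Ssq := by
  have hsrs : srs N n = powersetCard n univ := by ext ω; simp [srs, mem_powersetCard]
  have hsample : ∀ ω ∈ srs N n,
      (∑ i ∈ ω, (Y i - (∑ j ∈ ω, Y j) / (n : ℝ)) ^ 2) / ((n : ℝ) - 1) = sampleVariance Y ω :=
    fun ω hω ↦ by rw [sampleVariance, (mem_filter.1 hω).2]
  have hpopulation : Ssq = sampleVariance Y univ := by
    rw [hSsq, hYbar, sampleVariance, card_univ, Fintype.card_fin]
  rw [Ex, sum_congr rfl hsample, hsrs, sum_powersetCard_sampleVariance Y hn (by simpa),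
    card_powersetCard, card_univ, Fintype.card_fin, hpopulation,
    mul_div_cancel_left₀ _ (by exact_mod_cast (Nat.choose_pos hnN).ne')]

/-- the sample variance is unbiased for the population
variance under SRSWOR. -/
theorem sample_variance_unbiased (N n : ℕ) (hN : 2 ≤ N) (hn : 2 ≤ n)
    (hnN : n ≤ N) (Y : Fin N → ℝ) (Ybar Ssq : ℝ)
    (hYbar : Ybar = (∑ i, Y i) / (N : ℝ))
    (hSsq : Ssq = (∑ i, (Y i - Ybar) ^ 2) / ((N : ℝ) - 1)) :
    Ex (srs N n)
      (fun ω => (∑ i ∈ ω, (Y i - (∑ j ∈ ω, Y j) / (n : ℝ)) ^ 2) / ((n : ℝ) - 1))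
      = Ssq :=
  sample_variance_unbiased_general N n hn hnN Y Ybar Ssq hYbar hSsq
end
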